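/- Let A : U → ℝ be smooth and positive on open U ⊆ ℝ², B = (1/2) log A, and u, b₁₁, b₁₂, b₂₂ smooth with u = b₁₁ + b₂₂, satisfying the Codazzi equations ∂₂b₁₁ − ∂₁b₁₂ = u∂₂B and ∂₁b₂₂ − ∂₂b₁₂ = u∂₁B. Then the component formula A(Δb)₁₁ = Δᵉb₁₁ − 2b₁₁ΔB − 4∂₁B·∂₁u + 2u(3(∂₁B)² − (∂₂B)²) holds, where (Δb)₁₁ = gᵏˡ∇ₖ∇ₗb₁₁ for the conformal metric g = A((du¹)²+(du²)²). -/

import Mathlib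

open scoped BigOperators

/-- Partial derivative in coordinate direction `i` on `ℝ²`. -/
noncomputable def pd (i : Fin 2) (f : ℝ × ℝ → ℝ) (x : ℝ × ℝ) : ℝ :=
  fderiv ℝ f x (if i = 0 then (1, 0) else (0, 1))

/-- The flat Laplacian `Δᵉf = ∂₁₁f + ∂₂₂f` on `ℝ²`. -/
noncomputable def lapE (f : ℝ × ℝ → ℝ) (x : ℝ × ℝ) : ℝ :=
  pd 0 (pd 0 f) x + pd 1 (pd 1 f) x

/-- Christoffel symbols of a metric `gm` with inverse `ginv`. -/
noncomputable def christoffel (gm ginv : Fin 2 → Fin 2 → ℝ × ℝ → ℝ)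
    (k i j : Fin 2) (x : ℝ × ℝ) : ℝ :=
  (1 / 2) * ∑ l : Fin 2, ginv k l x *
    (pd i (gm j l) x + pd j (gm i l) x - pd l (gm i j) x)

/-- First covariant derivative of a symmetric 2-tensor. -/
noncomputable def cov1 (gm ginv b : Fin 2 → Fin 2 → ℝ × ℝ → ℝ)
    (l j k : Fin 2) (x : ℝ × ℝ) : ℝ :=
  pd l (b j k) x - (∑ m : Fin 2, christoffel gm ginv m l j x * b m k x)
    - ∑ m : Fin 2, christoffel gm ginv m l k x * b j m x

/-- Second covariant derivative `∇ₖ∇ₗb_{ij}` of a symmetric 2-tensor. -/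
noncomputable def cov2 (gm ginv b : Fin 2 → Fin 2 → ℝ × ℝ → ℝ)
    (k l i j : Fin 2) (x : ℝ × ℝ) : ℝ :=
  pd k (fun y => cov1 gm ginv b l i j y) x
    - (∑ m : Fin 2, christoffel gm ginv m k l x * cov1 gm ginv b m i j x)
    - (∑ m : Fin 2, christoffel gm ginv m k i x * cov1 gm ginv b l m j x)
    - ∑ m : Fin 2, christoffel gm ginv m k j x * cov1 gm ginv b l i m x

/-- Rough Laplacian `(Δb)_{ij} = gᵏˡ∇ₖ∇ₗb_{ij}` of a symmetric 2-tensor. -/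
noncomputable def lapTensor (gm ginv b : Fin 2 → Fin 2 → ℝ × ℝ → ℝ)
    (i j : Fin 2) (x : ℝ × ℝ) : ℝ :=
  ∑ k : Fin 2, ∑ l : Fin 2, ginv k l x * cov2 gm ginv b k l i j x

/-- The conformal metric `g_{ij} = A·δ_{ij}`. -/
noncomputable def gconf (A : ℝ × ℝ → ℝ) : Fin 2 → Fin 2 → ℝ × ℝ → ℝ :=
  fun i j x => if i = j then A x else 0

/-- The inverse of the conformal metric. -/
noncomputable def gconfInv (A : ℝ × ℝ → ℝ) : Fin 2 → Fin 2 → ℝ × ℝ → ℝ :=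
  fun i j x => if i = j then (A x)⁻¹ else 0

/-! ### Auxiliary calculus lemmas for `pd` -/

lemma pd_congr {f g : ℝ × ℝ → ℝ} {x : ℝ × ℝ} (h : f =ᶠ[nhds x] g) (i : Fin 2) :
    pd i f x = pd i g x := by
  unfold pd; rw [h.fderiv_eq]

lemma pd_add (i : Fin 2) {f g : ℝ × ℝ → ℝ} {x : ℝ × ℝ}
    (hf : DifferentiableAt ℝ f x) (hg : DifferentiableAt ℝ g x) :
    pd i (fun y => f y + g y) x = pd i f x + pd i g x := by
  unfold pd; rw [fderiv_fun_add hf hg]; simp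

lemma pd_mul (i : Fin 2) {f g : ℝ × ℝ → ℝ} {x : ℝ × ℝ}
    (hf : DifferentiableAt ℝ f x) (hg : DifferentiableAt ℝ g x) :
    pd i (fun y => f y * g y) x = pd i f x * g x + f x * pd i g x := by
  unfold pd; rw [fderiv_fun_mul hf hg]; simp; ring

lemma pd_const (i : Fin 2) (c : ℝ) (x : ℝ × ℝ) : pd i (fun _ => c) x = 0 := by
  unfold pd; simp

lemma pd_const_mul (i : Fin 2) (c : ℝ) {f : ℝ × ℝ → ℝ} {x : ℝ × ℝ}
    (hf : DifferentiableAt ℝ f x) :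
    pd i (fun y => c * f y) x = c * pd i f x := by
  unfold pd; rw [fderiv_const_mul hf]; simp

lemma contDiffAt_pd {f : ℝ × ℝ → ℝ} {U : Set (ℝ × ℝ)} (hU : IsOpen U)
    (hf : ContDiffOn ℝ (⊤ : ℕ∞) f U) {x : ℝ × ℝ} (hx : x ∈ U) (i : Fin 2) :
    ContDiffAt ℝ (⊤ : ℕ∞) (pd i f) x := by
  have h1 : ContDiffAt ℝ (⊤ : ℕ∞) f x := hf.contDiffAt (hU.mem_nhds hx)
  have h2 : ContDiffAt ℝ (⊤ : ℕ∞) (fderiv ℝ f) x := h1.fderiv_right (by simp)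
  exact h2.clm_apply contDiffAt_const

lemma diffAt_pd {f : ℝ × ℝ → ℝ} {U : Set (ℝ × ℝ)} (hU : IsOpen U)
    (hf : ContDiffOn ℝ (⊤ : ℕ∞) f U) {x : ℝ × ℝ} (hx : x ∈ U) (i : Fin 2) :
    DifferentiableAt ℝ (pd i f) x :=
  (contDiffAt_pd hU hf hx i).differentiableAt (by simp)

lemma diffAt_of_contDiffOn {f : ℝ × ℝ → ℝ} {U : Set (ℝ × ℝ)} (hU : IsOpen U)
    (hf : ContDiffOn ℝ (⊤ : ℕ∞) f U) {x : ℝ × ℝ} (hx : x ∈ U) :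
    DifferentiableAt ℝ f x :=
  (hf.contDiffAt (hU.mem_nhds hx)).differentiableAt (by simp)

lemma pd_comm {f : ℝ × ℝ → ℝ} {U : Set (ℝ × ℝ)} (hU : IsOpen U)
    (hf : ContDiffOn ℝ (⊤ : ℕ∞) f U) {x : ℝ × ℝ} (hx : x ∈ U) :
    pd 0 (pd 1 f) x = pd 1 (pd 0 f) x := by
  have hfx : ContDiffAt ℝ (⊤ : ℕ∞) f x := hf.contDiffAt (hU.mem_nhds hx)
  have hsym := hfx.isSymmSndFDerivAt (by rw [minSmoothness_of_isRCLikeNormedField]; exact WithTop.coe_le_coe.mpr le_top)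
  have hdf : DifferentiableAt ℝ (fderiv ℝ f) x :=
    (hfx.fderiv_right (m := 1) (by exact WithTop.coe_le_coe.mpr le_top)).differentiableAt one_ne_zero
  unfold pd
  rw [show (fun y => fderiv ℝ f y ((if (1:Fin 2) = 0 then ((1:ℝ),(0:ℝ)) else (0,1))))
      = fun y => fderiv ℝ f y (0,1) by simp,
    show (fun y => fderiv ℝ f y ((if (0:Fin 2) = 0 then ((1:ℝ),(0:ℝ)) else (0,1))))
      = fun y => fderiv ℝ f y (1,0) by simp]
  rw [fderiv_clm_apply hdf (differentiableAt_const _),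
      fderiv_clm_apply hdf (differentiableAt_const _)]
  simp [hsym.eq]

lemma pd_formula (k : Fin 2) {f g1 h1 g2 h2 : ℝ × ℝ → ℝ} (c1 c2 : ℝ) {x : ℝ × ℝ}
    (hf : DifferentiableAt ℝ f x) (hg1 : DifferentiableAt ℝ g1 x)
    (hh1 : DifferentiableAt ℝ h1 x) (hg2 : DifferentiableAt ℝ g2 x)
    (hh2 : DifferentiableAt ℝ h2 x) :
    pd k (fun y => f y + c1 * (g1 y * h1 y) + c2 * (g2 y * h2 y)) x
      = pd k f x + c1 * (pd k g1 x * h1 x + g1 x * pd k h1 x)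
        + c2 * (pd k g2 x * h2 x + g2 x * pd k h2 x) := by
  have d1 : DifferentiableAt ℝ (fun y => c1 * (g1 y * h1 y)) x := (hg1.mul hh1).const_mul c1
  have d2 : DifferentiableAt ℝ (fun y => c2 * (g2 y * h2 y)) x := (hg2.mul hh2).const_mul c2
  rw [pd_add k (f := fun y => f y + c1 * (g1 y * h1 y)) (hf.add d1) d2, pd_add k hf d1, pd_const_mul k c1 (f := fun y => g1 y * h1 y) (hg1.mul hh1),
      pd_const_mul k c2 (f := fun y => g2 y * h2 y) (hg2.mul hh2), pd_mul k hg1 hh1, pd_mul k hg2 hh2]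

lemma pdA_eq {U : Set (ℝ × ℝ)} (hU : IsOpen U) {A B : ℝ × ℝ → ℝ}
    (hA : ContDiffOn ℝ (⊤ : ℕ∞) A U) (hApos : ∀ x ∈ U, 0 < A x)
    (hB : B = fun x => (1 / 2) * Real.log (A x)) (i : Fin 2) {y : ℝ × ℝ} (hy : y ∈ U) :
    pd i A y = 2 * A y * pd i B y := by
  have hAne : A y ≠ 0 := (hApos y hy).ne'
  have hAy : DifferentiableAt ℝ A y := diffAt_of_contDiffOn hU hA hy
  have hlog : HasFDerivAt (fun z => Real.log (A z)) ((A y)⁻¹ • fderiv ℝ A y) y :=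
    hAy.hasFDerivAt.log hAne
  have hBd : HasFDerivAt B ((1 / 2 : ℝ) • ((A y)⁻¹ • fderiv ℝ A y)) y := by
    rw [hB]; exact hlog.const_mul (1 / 2)
  have h1 : pd i B y = (1 / 2) * ((A y)⁻¹ * pd i A y) := by
    unfold pd; rw [hBd.fderiv]; simp
  rw [h1]; field_simp

lemma christoffel_eq {U : Set (ℝ × ℝ)} (hU : IsOpen U) {A B : ℝ × ℝ → ℝ}
    (hA : ContDiffOn ℝ (⊤ : ℕ∞) A U) (hApos : ∀ x ∈ U, 0 < A x)
    (hB : B = fun x => (1 / 2) * Real.log (A x)) (k i j : Fin 2) {y : ℝ × ℝ} (hy : y ∈ U) :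
    christoffel (gconf A) (gconfInv A) k i j y =
      (if j = k then pd i B y else 0) + (if i = k then pd j B y else 0)
        - (if i = j then pd k B y else 0) := by
  have hAne : A y ≠ 0 := (hApos y hy).ne'
  have hpA := fun (i : Fin 2) => pdA_eq hU hA hApos hB i hy
  fin_cases k <;> fin_cases i <;> fin_cases j <;>
    (unfold christoffel gconf gconfInv;
     norm_num [Fin.sum_univ_two, pd_const, hpA];
     field_simp;
     try ring)

/-- Formula (4), first component: under the Codazzi equations,
`A(Δb)₁₁ = Δᵉb₁₁ − 2b₁₁ΔB − 4∂₁B·∂₁u + 2u(3(∂₁B)² − (∂₂B)²)` where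
`u = b₁₁ + b₂₂` and `B = (1/2) log A`. -/
theorem lapTensor_component_formula (U : Set (ℝ × ℝ)) (hU : IsOpen U)
    (A B u : ℝ × ℝ → ℝ) (b : Fin 2 → Fin 2 → ℝ × ℝ → ℝ)
    (hA : ContDiffOn ℝ (⊤ : ℕ∞) A U) (hApos : ∀ x ∈ U, 0 < A x)
    (hB : B = fun x => (1 / 2) * Real.log (A x))
    (hb : ∀ i j : Fin 2, ContDiffOn ℝ (⊤ : ℕ∞) (b i j) U)
    (hbsymm : ∀ x, b 0 1 x = b 1 0 x)
    (hu : ∀ x, u x = b 0 0 x + b 1 1 x)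
    (hcod1 : ∀ x ∈ U, pd 1 (b 0 0) x - pd 0 (b 0 1) x = u x * pd 1 B x)
    (hcod2 : ∀ x ∈ U, pd 0 (b 1 1) x - pd 1 (b 0 1) x = u x * pd 0 B x) :
    ∀ x ∈ U, A x * lapTensor (gconf A) (gconfInv A) b 0 0 x =
      lapE (b 0 0) x - 2 * b 0 0 x * lapE B x - 4 * pd 0 B x * pd 0 u x
        + 2 * u x * (3 * (pd 0 B x) ^ 2 - (pd 1 B x) ^ 2) := by
  intro x hx
  have hAne : A x ≠ 0 := (hApos x hx).ne'
  have hsf : b 1 0 = b 0 1 := funext fun y => (hbsymm y).symm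
  have hBsm : ContDiffOn ℝ (⊤ : ℕ∞) B U := by
    rw [hB]; exact contDiffOn_const.mul (hA.log fun y hy => (hApos y hy).ne')
  have hG : ∀ (k i j : Fin 2) (y : ℝ × ℝ), y ∈ U →
      christoffel (gconf A) (gconfInv A) k i j y =
        (if j = k then pd i B y else 0) + (if i = k then pd j B y else 0)
          - (if i = j then pd k B y else 0) :=
    fun k i j y hy => christoffel_eq hU hA hApos hB k i j hy
  -- pointwise/function formulas for the first covariant derivatives
  have hc000 : ∀ y ∈ U, cov1 (gconf A) (gconfInv A) b 0 0 0 y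
      = pd 0 (b 0 0) y + (-2) * (pd 0 B y * b 0 0 y) + 2 * (pd 1 B y * b 0 1 y) := by
    intro y hy
    unfold cov1
    simp only [Fin.sum_univ_two, hG 0 0 0 y hy, hG 1 0 0 y hy]
    norm_num
    try rw [hsf]
    ring
  have hc100 : ∀ y ∈ U, cov1 (gconf A) (gconfInv A) b 1 0 0 y
      = pd 1 (b 0 0) y + (-2) * (pd 1 B y * b 0 0 y) + (-2) * (pd 0 B y * b 0 1 y) := by
    intro y hy
    unfold cov1
    simp only [Fin.sum_univ_two, hG 0 1 0 y hy, hG 1 1 0 y hy]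
    norm_num
    try rw [hsf]
    ring
  have hc010 : cov1 (gconf A) (gconfInv A) b 0 1 0 x
      = pd 0 (b 0 1) x - pd 1 B x * b 0 0 x - 2 * (pd 0 B x * b 0 1 x)
        + pd 1 B x * b 1 1 x := by
    unfold cov1
    simp only [Fin.sum_univ_two, hG 0 0 1 x hx, hG 1 0 1 x hx, hG 0 0 0 x hx, hG 1 0 0 x hx]
    norm_num
    try rw [hsf]
    ring
  have hc110 : cov1 (gconf A) (gconfInv A) b 1 1 0 x
      = pd 1 (b 0 1) x + pd 0 B x * b 0 0 x - 2 * (pd 1 B x * b 0 1 x)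
        - pd 0 B x * b 1 1 x := by
    unfold cov1
    simp only [Fin.sum_univ_two, hG 0 1 1 x hx, hG 1 1 1 x hx, hG 0 1 0 x hx, hG 1 1 0 x hx]
    norm_num
    try rw [hsf]
    ring
  have hc001 : cov1 (gconf A) (gconfInv A) b 0 0 1 x
      = pd 0 (b 0 1) x - pd 1 B x * b 0 0 x - 2 * (pd 0 B x * b 0 1 x)
        + pd 1 B x * b 1 1 x := by
    unfold cov1
    simp only [Fin.sum_univ_two, hG 0 0 0 x hx, hG 1 0 0 x hx, hG 0 0 1 x hx, hG 1 0 1 x hx]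
    norm_num
    try rw [hsf]
    ring
  have hc101 : cov1 (gconf A) (gconfInv A) b 1 0 1 x
      = pd 1 (b 0 1) x + pd 0 B x * b 0 0 x - 2 * (pd 1 B x * b 0 1 x)
        - pd 0 B x * b 1 1 x := by
    unfold cov1
    simp only [Fin.sum_univ_two, hG 0 1 0 x hx, hG 1 1 0 x hx, hG 0 1 1 x hx, hG 1 1 1 x hx]
    norm_num
    try rw [hsf]
    ring
  -- differentiability facts at x
  have d00 : DifferentiableAt ℝ (b 0 0) x := diffAt_of_contDiffOn hU (hb 0 0) hx
  have d01 : DifferentiableAt ℝ (b 0 1) x := diffAt_of_contDiffOn hU (hb 0 1) hx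
  have d11 : DifferentiableAt ℝ (b 1 1) x := diffAt_of_contDiffOn hU (hb 1 1) hx
  have dB0 : DifferentiableAt ℝ (pd 0 B) x := diffAt_pd hU hBsm hx 0
  have dB1 : DifferentiableAt ℝ (pd 1 B) x := diffAt_pd hU hBsm hx 1
  have dp000 : DifferentiableAt ℝ (pd 0 (b 0 0)) x := diffAt_pd hU (hb 0 0) hx 0
  have dp100 : DifferentiableAt ℝ (pd 1 (b 0 0)) x := diffAt_pd hU (hb 0 0) hx 1
  -- the two derivatives of the covariant derivative
  have E0 : pd 0 (fun y => cov1 (gconf A) (gconfInv A) b 0 0 0 y) x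
      = pd 0 (pd 0 (b 0 0)) x
        + (-2) * (pd 0 (pd 0 B) x * b 0 0 x + pd 0 B x * pd 0 (b 0 0) x)
        + 2 * (pd 0 (pd 1 B) x * b 0 1 x + pd 1 B x * pd 0 (b 0 1) x) := by
    rw [pd_congr (Filter.eventuallyEq_of_mem (hU.mem_nhds hx) fun y hy => hc000 y hy) 0]
    exact pd_formula 0 (-2) 2 dp000 dB0 d00 dB1 d01
  have E1 : pd 1 (fun y => cov1 (gconf A) (gconfInv A) b 1 0 0 y) x
      = pd 1 (pd 1 (b 0 0)) x
        + (-2) * (pd 1 (pd 1 B) x * b 0 0 x + pd 1 B x * pd 1 (b 0 0) x)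
        + (-2) * (pd 1 (pd 0 B) x * b 0 1 x + pd 0 B x * pd 1 (b 0 1) x) := by
    rw [pd_congr (Filter.eventuallyEq_of_mem (hU.mem_nhds hx) fun y hy => hc100 y hy) 1]
    exact pd_formula 1 (-2) (-2) dp100 dB1 d00 dB0 d01
  -- derivative of u
  have hufun : u = fun y => b 0 0 y + b 1 1 y := funext hu
  have hpdu : pd 0 u x = pd 0 (b 0 0) x + pd 0 (b 1 1) x := by
    rw [hufun]; exact pd_add 0 d00 d11
  have hSch : pd 0 (pd 1 B) x = pd 1 (pd 0 B) x := pd_comm hU hBsm hx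
  have hc1 := hcod1 x hx
  have hc2 := hcod2 x hx
  rw [hu x] at hc1 hc2
  -- assemble
  have hg : ∀ k l : Fin 2, gconfInv A k l x = if k = l then (A x)⁻¹ else 0 := fun k l => rfl
  unfold lapTensor cov2 lapE
  simp only [Fin.sum_univ_two, hg]
  norm_num
  rw [E0, E1, hSch]
  simp only [hG 0 0 0 x hx, hG 1 0 0 x hx, hG 0 1 1 x hx, hG 1 1 1 x hx,
    hG 0 1 0 x hx, hG 1 1 0 x hx]
  norm_num
  rw [hc000 x hx, hc100 x hx, hc010, hc110, hc001, hc101, hpdu, hu x]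
  field_simp
  linear_combination (4 * pd 0 B x) * hc2 - (4 * pd 1 B x) * hc1
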